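/- Fix ν_s > 0 and let 0 < ν_d ≤ ν_d′ be such that ĉₑ(ν_d,ν_s) + b̂ₑ(ν_d) > 0. Then ĉₑ(ν_d′,ν_s) + b̂ₑ(ν_d′) > 0 and b̂ₑ(ν_d′)/(ĉₑ(ν_d′,ν_s) + b̂ₑ(ν_d′)) ≤ b̂ₑ(ν_d)/(ĉₑ(ν_d,ν_s) + b̂ₑ(ν_d)); i.e., the ratio b̂ₑ/(ĉₑ + b̂ₑ) is monotonically decreasing in the true decoy intensity ν_d on the region where ĉₑ + b̂ₑ is positive. -/

import Mathlib

/-- Estimate `b̂ₑ` with true decoy intensity `νd` and assumed decoy intensity `μd`. -/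
noncomputable def bE (α s p₀ μd νd : ℝ) : ℝ :=
  ((s * (1 - Real.exp (-α * νd)) + p₀ / 2) * Real.exp μd - p₀ / 2) / μd

/-- Estimate `ĉₑ` with true intensities `νd, νs` and assumed intensities `μd, μs`. -/
noncomputable def cE (α s p₀ μd μs νd νs : ℝ) : ℝ :=
  (μs ^ 2 * Real.exp μd * ((1 - s) * (1 - Real.exp (-α * νd)) + (p₀ / 2) * (1 - Real.exp (-μd)))
    - μd ^ 2 * Real.exp μs * ((1 - s) * (1 - Real.exp (-α * νs)) + (p₀ / 2) * (1 - Real.exp (-μs))))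
  / (μd * μs * (μs - μd))

/-!
Both estimates are affine in the detection probability `x = 1 - exp (-α νd)`, which is monotone
in `νd`: `b̂ₑ = A x + B` and `ĉₑ = C x + D`. The ratio `(A x + B) / ((A + C) x + (B + D))` is then
antitone in `x` as soon as `A + C ≥ 0` and `A D ≤ B C`; after clearing the positive denominators
the latter becomes `s ≤ 1 - s` plus the nonnegativity of the signal term of `ĉₑ`.
-/

open Real

lemma affine_div_affine_antitone {A B C D x x' : ℝ} (hAC : 0 ≤ A + C) (hAD : A * D ≤ B * C)
    (hx : x ≤ x') (hpos : 0 < C * x + D + (A * x + B)) :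
    0 < C * x' + D + (A * x' + B) ∧
      (A * x' + B) / (C * x' + D + (A * x' + B)) ≤ (A * x + B) / (C * x + D + (A * x + B)) := by
  have hpos' : 0 < C * x' + D + (A * x' + B) := by nlinarith [mul_nonneg hAC (sub_nonneg.2 hx)]
  refine ⟨hpos', ?_⟩
  rw [div_le_div_iff₀ hpos' hpos]
  nlinarith [mul_nonneg (sub_nonneg.2 hx) (sub_nonneg.2 hAD)]

noncomputable def detectionProb (α ν : ℝ) : ℝ := 1 - exp (-α * ν)

lemma detectionProb_nonneg {α ν : ℝ} (hα : 0 ≤ α) (hν : 0 ≤ ν) : 0 ≤ detectionProb α ν := by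
  have : exp (-α * ν) ≤ 1 := exp_le_one_iff.2 (by nlinarith)
  unfold detectionProb
  linarith

lemma monotone_detectionProb {α : ℝ} (hα : 0 ≤ α) : Monotone (detectionProb α) := fun ν ν' h => by
  have : exp (-α * ν') ≤ exp (-α * ν) := exp_le_exp.2 (by nlinarith)
  unfold detectionProb
  linarith

section Coefficients

variable (α s p₀ μd μs νs : ℝ)

noncomputable def bSlope : ℝ := s * exp μd / μd

noncomputable def bIntercept : ℝ := p₀ / 2 * (exp μd - 1) / μd

noncomputable def cSlope : ℝ := μs ^ 2 * exp μd * (1 - s) / (μd * μs * (μs - μd))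

noncomputable def cIntercept : ℝ :=
  (μs ^ 2 * (p₀ / 2) * (exp μd - 1)
    - μd ^ 2 * exp μs * ((1 - s) * detectionProb α νs + p₀ / 2 * (1 - exp (-μs))))
  / (μd * μs * (μs - μd))

lemma bE_eq_affine (ν : ℝ) :
    bE α s p₀ μd ν = bSlope s μd * detectionProb α ν + bIntercept p₀ μd := by
  unfold bE bSlope bIntercept detectionProb
  ring

lemma cE_eq_affine (ν : ℝ) :
    cE α s p₀ μd μs ν νs = cSlope s μd μs * detectionProb α ν + cIntercept α s p₀ μd μs νs := by
  have h : exp μd * exp (-μd) = 1 := by rw [← exp_add, add_neg_cancel, exp_zero]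
  unfold cE cSlope cIntercept detectionProb
  linear_combination (-(μs ^ 2 * (p₀ / 2)) / (μd * μs * (μs - μd))) * h

variable {α s p₀ μd μs νs}

lemma bSlope_add_cSlope_nonneg (hs0 : 0 ≤ s) (hs1 : s ≤ 1) (hμd : 0 < μd) (hμ : μd < μs) :
    0 ≤ bSlope s μd + cSlope s μd μs := by
  have hK : 0 < μd * μs * (μs - μd) := mul_pos (mul_pos hμd (hμd.trans hμ)) (sub_pos.2 hμ)
  unfold bSlope cSlope
  exact add_nonneg (by positivity) (div_nonneg (mul_nonneg (by positivity) (by linarith)) hK.le)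

lemma bSlope_mul_cIntercept_le (hα : 0 ≤ α) (hs0 : 0 ≤ s) (hs : s ≤ 1 / 2) (hp : 0 ≤ p₀)
    (hμd : 0 < μd) (hμ : μd < μs) (hνs : 0 ≤ νs) :
    bSlope s μd * cIntercept α s p₀ μd μs νs ≤ bIntercept p₀ μd * cSlope s μd μs := by
  have hK : 0 < μd * μs * (μs - μd) := mul_pos (mul_pos hμd (hμd.trans hμ)) (sub_pos.2 hμ)
  have he : 0 ≤ exp μd - 1 := by linarith [add_one_le_exp μd]
  have hT : 0 ≤ (1 - s) * detectionProb α νs + p₀ / 2 * (1 - exp (-μs)) := by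
    have : exp (-μs) ≤ 1 := exp_le_one_iff.2 (by linarith)
    have := detectionProb_nonneg hα hνs
    have : 0 ≤ 1 - s := by linarith
    positivity
  have hdiff : bIntercept p₀ μd * cSlope s μd μs - bSlope s μd * cIntercept α s p₀ μd μs νs
      = exp μd / (μd * (μd * μs * (μs - μd)))
        * (p₀ / 2 * (exp μd - 1) * μs ^ 2 * (1 - 2 * s) + s * μd ^ 2 * exp μs
          * ((1 - s) * detectionProb α νs + p₀ / 2 * (1 - exp (-μs)))) := by
    unfold bIntercept cSlope bSlope cIntercept
    field_simp
    ring
  have : 0 ≤ 1 - 2 * s := by linarith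
  have : 0 ≤ bIntercept p₀ μd * cSlope s μd μs - bSlope s μd * cIntercept α s p₀ μd μs νs := by
    rw [hdiff]
    positivity
  linarith

end Coefficients

theorem stmt14_general (α s p₀ μd μs νs νd νd' : ℝ)
    (hα : 0 < α) (hs0 : 0 ≤ s) (hs : s < 1 / 2) (hp : 0 < p₀)
    (hμd : 0 < μd) (hμ : μd < μs) (hνs : 0 < νs)
    (hνd' : νd ≤ νd')
    (hpos : 0 < cE α s p₀ μd μs νd νs + bE α s p₀ μd νd) :
    0 < cE α s p₀ μd μs νd' νs + bE α s p₀ μd νd' ∧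
    bE α s p₀ μd νd' / (cE α s p₀ μd μs νd' νs + bE α s p₀ μd νd')
      ≤ bE α s p₀ μd νd / (cE α s p₀ μd μs νd νs + bE α s p₀ μd νd) := by
  simp only [bE_eq_affine, cE_eq_affine] at hpos ⊢
  exact affine_div_affine_antitone (bSlope_add_cSlope_nonneg hs0 (by linarith) hμd hμ)
    (bSlope_mul_cIntercept_le hα.le hs0 hs.le hp.le hμd hμ hνs.le)
    (monotone_detectionProb hα.le hνd') hpos

theorem stmt14 (α s p₀ μd μs νs νd νd' : ℝ)
    (hα : 0 < α) (hα1 : α ≤ 1) (hs0 : 0 ≤ s) (hs : s < 1 / 2) (hp : 0 < p₀)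
    (hμd : 0 < μd) (hμ : μd < μs) (hνs : 0 < νs)
    (hνd : 0 < νd) (hνd' : νd ≤ νd')
    (hpos : 0 < cE α s p₀ μd μs νd νs + bE α s p₀ μd νd) :
    0 < cE α s p₀ μd μs νd' νs + bE α s p₀ μd νd' ∧
    bE α s p₀ μd νd' / (cE α s p₀ μd μs νd' νs + bE α s p₀ μd νd')
      ≤ bE α s p₀ μd νd / (cE α s p₀ μd μs νd νs + bE α s p₀ μd νd) :=
  stmt14_general α s p₀ μd μs νs νd νd' hα hs0 hs hp hμd hμ hνs hνd' hpos
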